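/- Let $N \in \mathbb{Q}^{m \times n}$, let $V \in \{0,1\}^{m \times u}$ be a matrix in which every column contains exactly one $1$ and every row contains at least one $1$, let $E \in \mathbb{Q}^{v \times n}$, let $L \in \mathbb{Q}^{r \times m}$ have nonnegative entries, and for each $k \in \{1,\dots,r\}$ let $M(k) \in \mathbb{Q}^{u \times v}$. Suppose that $\mathrm{diag}(L^{T}\mathbb{1}) = V V^{T}$ and that $\mathrm{diag}(L_{k,:})\, N = V\, M(k)\, E$ for every $k \in \{1,\dots,r\}$. Then, setting $M := \sum_{k=1}^{r} M(k)$, one has $N = (V V^{T})^{-1} V M E = \mathrm{diag}(L^{T}\mathbb{1})^{-1} \sum_{k=1}^{r} \mathrm{diag}(L_{k,:})\, N$. -/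

import Mathlib

/-!
Summing the moiety-wise splittings `diagonal (L k) * N = V * M k * E` over `k` gives
`diagonal (Lᵀ *ᵥ 1) * N = V * M * E`, since `Lᵀ *ᵥ 1 = ∑ k, L k`. The diagonal matrix
`diagonal (Lᵀ *ᵥ 1) = V * Vᵀ` is invertible: its `i`-th entry is the squared norm of the
`i`-th row of `V`, which is nonzero. Cancelling it on the left yields both expressions for `N`.
-/

open Matrix

namespace Matrix

variable {ι m n R : Type*}

theorem diagonal_transpose_mulVec_one [Fintype ι] [DecidableEq m] [Semiring R]
    (L : Matrix ι m R) : diagonal (Lᵀ *ᵥ 1) = ∑ k, diagonal (L k) := by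
  rw [mulVec_one, transpose_transpose]
  exact map_sum (diagonalAddMonoidHom m R) _ _

theorem mul_transpose_self_apply_self_ne_zero [Fintype n] [Ring R] [LinearOrder R]
    [IsStrictOrderedRing R] (V : Matrix m n R) {i : m} (hi : V i ≠ 0) :
    (V * Vᵀ) i i ≠ 0 := by
  rwa [Ne, ← dotProduct_self_eq_zero] at hi

theorem isUnit_diagonal_of_eq_mul_transpose_self [Fintype m] [Fintype n] [DecidableEq m]
    [Field R] [LinearOrder R] [IsStrictOrderedRing R] {d : m → R} {V : Matrix m n R}
    (hd : diagonal d = V * Vᵀ) (hV : ∀ i, V i ≠ 0) : IsUnit (diagonal d) := by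
  refine isUnit_diagonal.mpr (Pi.isUnit_iff.mpr fun i => Ne.isUnit ?_)
  have := mul_transpose_self_apply_self_ne_zero V (hV i)
  rwa [← hd, diagonal_apply_eq] at this

end Matrix

theorem stmt_8_general (m n u v r : ℕ)
    (N : Matrix (Fin m) (Fin n) ℚ)
    (V : Matrix (Fin m) (Fin u) ℚ)
    (hVrow : ∀ i : Fin m, ∃ j : Fin u, V i j = 1)
    (E : Matrix (Fin v) (Fin n) ℚ)
    (L : Matrix (Fin r) (Fin m) ℚ)
    (M : Fin r → Matrix (Fin u) (Fin v) ℚ)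
    (hdiag : Matrix.diagonal (Lᵀ *ᵥ (1 : Fin r → ℚ)) = V * Vᵀ)
    (hk : ∀ k : Fin r, Matrix.diagonal (L k) * N = V * M k * E) :
    N = (V * Vᵀ)⁻¹ * (V * (∑ k : Fin r, M k) * E) ∧
      N = (Matrix.diagonal (Lᵀ *ᵥ (1 : Fin r → ℚ)))⁻¹ *
        ∑ k : Fin r, Matrix.diagonal (L k) * N := by
  set D := Matrix.diagonal (Lᵀ *ᵥ (1 : Fin r → ℚ))
  have hD : IsUnit D.det := (isUnit_iff_isUnit_det D).mp <|
    isUnit_diagonal_of_eq_mul_transpose_self hdiag fun i hi => by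
      obtain ⟨j, hj⟩ := hVrow i
      simp [hi] at hj
  have hsplit : ∑ k, Matrix.diagonal (L k) * N = D * N := by
    rw [← Matrix.sum_mul, ← diagonal_transpose_mulVec_one]
  have hgraph : D * N = V * (∑ k, M k) * E := by
    simp only [← hsplit, hk, Matrix.mul_sum, Matrix.sum_mul]
  have hcancel : D⁻¹ * (D * N) = N := Matrix.nonsing_inv_mul_cancel_left D N hD
  exact ⟨by rw [← hdiag, ← hgraph, hcancel], by rw [hsplit, hcancel]⟩

/-- Equivalence of the moiety graph decomposition and the conserved moiety
splitting of a stoichiometric matrix. -/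
theorem stmt_8 (m n u v r : ℕ)
    (N : Matrix (Fin m) (Fin n) ℚ)
    (V : Matrix (Fin m) (Fin u) ℚ)
    (hV01 : ∀ i j, V i j = 0 ∨ V i j = 1)
    (hVcol : ∀ j : Fin u, ∃! i : Fin m, V i j = 1)
    (hVrow : ∀ i : Fin m, ∃ j : Fin u, V i j = 1)
    (E : Matrix (Fin v) (Fin n) ℚ)
    (L : Matrix (Fin r) (Fin m) ℚ)
    (hL : ∀ k i, 0 ≤ L k i)
    (M : Fin r → Matrix (Fin u) (Fin v) ℚ)
    (hdiag : Matrix.diagonal (Lᵀ *ᵥ (1 : Fin r → ℚ)) = V * Vᵀ)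
    (hk : ∀ k : Fin r, Matrix.diagonal (L k) * N = V * M k * E) :
    N = (V * Vᵀ)⁻¹ * (V * (∑ k : Fin r, M k) * E) ∧
      N = (Matrix.diagonal (Lᵀ *ᵥ (1 : Fin r → ℚ)))⁻¹ *
        ∑ k : Fin r, Matrix.diagonal (L k) * N :=
  stmt_8_general m n u v r N V hVrow E L M hdiag hk
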